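/- arXiv:1609.00774 — 2 statements merged into one kernel-verified Lean document; each statement's English description precedes it below -/
import Mathlib

section
/- Let A be a complex with differentials d and δ satisfying d² = δ² = 0 and dδ + δd = 0, and suppose the dδ-lemma holds: im d ∩ ker δ = ker d ∩ im δ = im (dδ). Then the inclusion (ker δ, d) ↪ (A, d) induces an injective map on d-cohomology. -/
/-- dδ-lemma implies the inclusion `(ker δ, d) ↪ (A, d)` is injective on cohomology. -/
theorem stmt_1 {A : Type*} [AddCommGroup A] [Module ℝ A]
    (d δ : A →ₗ[ℝ] A)
    (hdd : d ∘ₗ d = 0) (hδδ : δ ∘ₗ δ = 0) (hanti : d ∘ₗ δ + δ ∘ₗ d = 0)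
    (hlemma₁ : ∀ x : A, ((∃ y, d y = x) ∧ δ x = 0) ↔ ∃ z, d (δ z) = x)
    (hlemma₂ : ∀ x : A, (d x = 0 ∧ (∃ y, δ y = x)) ↔ ∃ z, d (δ z) = x) :
    ∀ a : A, δ a = 0 → d a = 0 → (∃ b : A, d b = a) →
      ∃ c : A, δ c = 0 ∧ d c = a := by
  intro a hδa hda hb
  obtain ⟨z, hz⟩ := (hlemma₁ a).mp ⟨hb, hδa⟩
  exact ⟨δ z, congrFun (congrArg DFunLike.coe hδδ) z, hz⟩
end

section
/- Let A be a complex with differentials d and δ satisfying d² = δ² = 0, dδ + δd = 0, and the dδ-lemma (im d ∩ ker δ = ker d ∩ im δ = im(dδ)). Then the inclusion (ker δ, d) ↪ (A, d) induces a surjective map on d-cohomology, i.e. every d-closed element of A equals a d-closed δ-closed element plus a d-exact element. -/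
/-- dδ-lemma implies the inclusion `(ker δ, d) ↪ (A, d)` is surjective on cohomology:
every d-closed element is a d-closed δ-closed element plus a d-exact one. -/
theorem stmt_2 {A : Type*} [AddCommGroup A] [Module ℝ A]
    (d δ : A →ₗ[ℝ] A)
    (hdd : d ∘ₗ d = 0) (hδδ : δ ∘ₗ δ = 0) (hanti : d ∘ₗ δ + δ ∘ₗ d = 0)
    (hlemma₁ : ∀ x : A, ((∃ y, d y = x) ∧ δ x = 0) ↔ ∃ z, d (δ z) = x)
    (hlemma₂ : ∀ x : A, (d x = 0 ∧ (∃ y, δ y = x)) ↔ ∃ z, d (δ z) = x) :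
    ∀ a : A, d a = 0 → ∃ c b : A, d c = 0 ∧ δ c = 0 ∧ a = c + d b := by
  intro a ha
  have hanti' : ∀ x : A, d (δ x) + δ (d x) = 0 := fun x => by
    have := LinearMap.congr_fun hanti x; simpa using this
  have hδa : d (δ a) = 0 := by
    have := hanti' a; rw [ha, map_zero, add_zero] at this; exact this
  obtain ⟨w, hw⟩ := (hlemma₂ (δ a)).mp ⟨hδa, a, rfl⟩
  refine ⟨a + d w, -w, ?_, ?_, ?_⟩
  · have := LinearMap.congr_fun hdd w
    simp only [map_add, ha, zero_add]
    simpa using this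
  · rw [map_add, ← hw]
    exact hanti' w
  · simp
end
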